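/- arXiv:1208.2760 — 2 statements merged into one kernel-verified Lean document; each statement's English description precedes it below -/
import Mathlib

section
/- Define the encoding τ̃ : Conf(C×R) → Conf(Q̃) by τ̃(α)(2x) = φ̂(α(x)) and τ̃(α)(2x+1) = φ̌(α(x)). Then for every configuration α of P: (p_C(τ̃(α)(2x)), p_C(τ̃(α)(2x+1))) ∈ B_C for all x ∈ ℤ, but (p_R(τ̃(α)(2x−1)), p_R(τ̃(α)(2x))) ∉ B_R for all x ∈ ℤ, where membership refers to the heavy/light complementary pair conditions. -/
open scoped Classical

noncomputable section

/-- Heavy-particle part of a state: `p_C(q) = 2·sR·(q / (2·sR))`. -/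
def pC (sR q : ℕ) : ℕ := 2 * sR * (q / (2 * sR))

/-- Light-particle part of a state: `p_R(q) = q mod (2·sR)`. -/
def pR (sR q : ℕ) : ℕ := q % (2 * sR)

/-- All heavy particles `C̃ = {2k·sR : 0 ≤ k ≤ 2sC−1}`. -/
def Ctil (sC sR : ℕ) : Set ℕ := {c | ∃ k < 2 * sC, c = 2 * k * sR}

/-- All light particles `R̃ = {0,…,2sR−1}`. -/
def Rtil (sR : ℕ) : Set ℕ := {r | r < 2 * sR}

/-- `Ĉ = {2k·sR : 0 ≤ k ≤ sC−1}`. -/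
def Chat (sC sR : ℕ) : Set ℕ := {c | ∃ k < sC, c = 2 * k * sR}

/-- `Č = {2(k+sC)·sR : 0 ≤ k ≤ sC−1}`. -/
def Ccheck (sC sR : ℕ) : Set ℕ := {c | ∃ k < sC, c = 2 * (k + sC) * sR}

/-- `R̂ = {0,…,sR−1}`. -/
def Rhat (sR : ℕ) : Set ℕ := {r | r < sR}

/-- `Ř = {sR,…,2sR−1}`. -/
def Rcheck (sR : ℕ) : Set ℕ := {r | sR ≤ r ∧ r < 2 * sR}

/-- Balanced pair of states w.r.t. heavy particles. -/
def BC (sC sR q1 q2 : ℕ) : Prop :=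
  pC sR q1 ∈ Chat sC sR ∧ pC sR q2 ∈ Ccheck sC sR ∧
    pC sR q1 + pC sR q2 = 2 * (2 * sC - 1) * sR

/-- Balanced pair of states w.r.t. light particles. -/
def BR (sR q1 q2 : ℕ) : Prop :=
  pR sR q1 ∈ Rhat sR ∧ pR sR q2 ∈ Rcheck sR ∧
    pR sR q1 + pR sR q2 = 2 * sR - 1

/-- `φ̂_C : C → Ĉ` built from an arbitrary bijection `φC` of `C = Fin sC`. -/
def phatC (sC sR : ℕ) (φC : Fin sC ≃ Fin sC) (c : Fin sC) : ℕ := 2 * (φC c : ℕ) * sR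

/-- `φ̂_R : R → R̂` built from an arbitrary bijection `φR` of `R = Fin sR`. -/
def phatR (sR : ℕ) (φR : Fin sR ≃ Fin sR) (r : Fin sR) : ℕ := (φR r : ℕ)

/-- `φ̌_C(c) = 2(2sC−1)sR − φ̂_C(c)`. -/
def pcheckC (sC sR : ℕ) (φC : Fin sC ≃ Fin sC) (c : Fin sC) : ℕ :=
  2 * (2 * sC - 1) * sR - phatC sC sR φC c

/-- `φ̌_R(r) = 2sR−1 − φ̂_R(r)`. -/
def pcheckR (sR : ℕ) (φR : Fin sR ≃ Fin sR) (r : Fin sR) : ℕ :=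
  2 * sR - 1 - phatR sR φR r

/-- `φ̂(c,r) = φ̂_C(c) + φ̂_R(r)`. -/
def phat (sC sR : ℕ) (φC : Fin sC ≃ Fin sC) (φR : Fin sR ≃ Fin sR)
    (q : Fin sC × Fin sR) : ℕ := phatC sC sR φC q.1 + phatR sR φR q.2

/-- `φ̌(c,r) = φ̌_C(c) + φ̌_R(r)`. -/
def pcheck (sC sR : ℕ) (φC : Fin sC ≃ Fin sC) (φR : Fin sR ≃ Fin sR)
    (q : Fin sC × Fin sR) : ℕ := pcheckC sC sR φC q.1 + pcheckR sR φR q.2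

/-- `Q̂ = {ĉ + r̂ : ĉ ∈ Ĉ, r̂ ∈ R̂}`. -/
def Qhat (sC sR : ℕ) : Set ℕ := {q | ∃ c ∈ Chat sC sR, ∃ r ∈ Rhat sR, q = c + r}

/-- `Q̌ = {č + ř : č ∈ Č, ř ∈ Ř}`. -/
def Qcheck (sC sR : ℕ) : Set ℕ := {q | ∃ c ∈ Ccheck sC sR, ∃ r ∈ Rcheck sR, q = c + r}

/-- `φ̂_C⁻¹` applied to a heavy particle (given as a natural number). -/
def decC (sC sR : ℕ) [NeZero sC] (φC : Fin sC ≃ Fin sC) (c : ℕ) : Fin sC :=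
  φC.symm ⟨(c / (2 * sR)) % sC, Nat.mod_lt _ (Nat.pos_of_ne_zero (NeZero.ne sC))⟩

/-- `φ̂_R⁻¹` applied to a light particle (given as a natural number). -/
def decR (sR : ℕ) [NeZero sR] (φR : Fin sR ≃ Fin sR) (r : ℕ) : Fin sR :=
  φR.symm ⟨r % sR, Nat.mod_lt _ (Nat.pos_of_ne_zero (NeZero.ne sR))⟩

/-- The three-case local function `f̃` of the 4-neighbor RNCCA `A`. -/
def ftil (sC sR : ℕ) [NeZero sC] [NeZero sR] (φC : Fin sC ≃ Fin sC) (φR : Fin sR ≃ Fin sR)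
    (f : Fin sC × Fin sR → Fin sC × Fin sR) (qm2 qm1 q0 q1 : ℕ) : ℕ :=
  if BR sR qm1 q0 ∧ BC sC sR q0 q1 then
    phat sC sR φC φR (f (decC sC sR φC (pC sR q0), decR sR φR (pR sR qm1)))
  else if BR sR qm2 qm1 ∧ BC sC sR qm1 q0 then
    pcheck sC sR φC φR (f (decC sC sR φC (pC sR qm1), decR sR φR (pR sR qm2)))
  else pC sR q0 + pR sR qm1

/-- Global function `F̃` of `A` with neighborhood `(−2,−1,0,1)`. -/
def Ftil (sC sR : ℕ) [NeZero sC] [NeZero sR] (φC : Fin sC ≃ Fin sC) (φR : Fin sR ≃ Fin sR)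
    (f : Fin sC × Fin sR → Fin sC × Fin sR) (α : ℤ → ℕ) (x : ℤ) : ℕ :=
  ftil sC sR φC φR f (α (x - 2)) (α (x - 1)) (α x) (α (x + 1))

/-- The encoding `τ̃`: `τ̃(α)(2x) = φ̂(α(x))`, `τ̃(α)(2x+1) = φ̌(α(x))`. -/
def tenc (sC sR : ℕ) (φC : Fin sC ≃ Fin sC) (φR : Fin sR ≃ Fin sR)
    (α : ℤ → Fin sC × Fin sR) (y : ℤ) : ℕ :=
  if Even y then phat sC sR φC φR (α (y / 2)) else pcheck sC sR φC φR (α ((y - 1) / 2))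

/-- Global function of the 2-neighbor PCA `P` with neighborhood `(0,−1)`. -/
def FP {C R : Type*} (f : C × R → C × R) (α : ℤ → C × R) (x : ℤ) : C × R :=
  f ((α x).1, (α (x - 1)).2)

end

/-! Every encoded state is a heavy part `2 m sR` plus a light part below `2 sR`, so `pC` and `pR`
read the two parts back off. The heavy parts of `φ̂(q)` and `φ̌(q)` are complementary by
construction of `φ̌_C`, which gives `B_C`; the light part of `φ̂(q)` lies in `R̂`, never in `Ř`,
which rules out `B_R`. -/

section Encoding

variable {sC sR : ℕ} (φC : Fin sC ≃ Fin sC) (φR : Fin sR ≃ Fin sR)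

lemma pC_two_mul_mul_add {m l : ℕ} (hl : l < 2 * sR) : pC sR (2 * m * sR + l) = 2 * m * sR := by
  rw [pC, show 2 * m * sR + l = l + 2 * sR * m by ring,
    Nat.add_mul_div_left _ _ (by omega), Nat.div_eq_of_lt hl, zero_add, mul_right_comm]

lemma pR_two_mul_mul_add {m l : ℕ} (hl : l < 2 * sR) : pR sR (2 * m * sR + l) = l := by
  rw [pR, show 2 * m * sR + l = l + 2 * sR * m by ring, Nat.add_mul_mod_self_left,
    Nat.mod_eq_of_lt hl]

lemma phatR_lt (r : Fin sR) : phatR sR φR r < sR := (φR r).2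

lemma pcheckC_eq (c : Fin sC) : pcheckC sC sR φC c = 2 * (2 * sC - 1 - φC c) * sR := by
  rw [pcheckC, phatC, ← Nat.sub_mul, ← Nat.mul_sub]

lemma pC_phat (q : Fin sC × Fin sR) : pC sR (phat sC sR φC φR q) = phatC sC sR φC q.1 :=
  pC_two_mul_mul_add (by have := phatR_lt φR q.2; omega)

lemma pR_phat (q : Fin sC × Fin sR) : pR sR (phat sC sR φC φR q) = phatR sR φR q.2 :=
  pR_two_mul_mul_add (by have := phatR_lt φR q.2; omega)

lemma pC_pcheck (q : Fin sC × Fin sR) :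
    pC sR (pcheck sC sR φC φR q) = pcheckC sC sR φC q.1 := by
  rw [pcheck, pcheckC_eq, pC_two_mul_mul_add (by have := phatR_lt φR q.2; rw [pcheckR]; omega)]

lemma BC_phat_pcheck (q : Fin sC × Fin sR) :
    BC sC sR (phat sC sR φC φR q) (pcheck sC sR φC φR q) := by
  have hk := (φC q.1).2
  rw [BC, pC_phat, pC_pcheck, pcheckC_eq]
  refine ⟨⟨φC q.1, hk, rfl⟩, ⟨sC - 1 - φC q.1, by omega, by congr 2; omega⟩, ?_⟩
  rw [phatC, ← add_mul, ← mul_add]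
  congr 2
  omega

lemma not_BR_phat (a : ℕ) (q : Fin sC × Fin sR) : ¬ BR sR a (phat sC sR φC φR q) := by
  rintro ⟨-, hR, -⟩
  rw [pR_phat] at hR
  exact absurd (phatR_lt φR q.2) (not_lt.2 hR.1)

variable (α : ℤ → Fin sC × Fin sR) (x : ℤ)

lemma tenc_two_mul : tenc sC sR φC φR α (2 * x) = phat sC sR φC φR (α x) := by
  rw [tenc, if_pos (even_two_mul x), Int.mul_ediv_cancel_left _ two_ne_zero]

lemma tenc_two_mul_add_one : tenc sC sR φC φR α (2 * x + 1) = pcheck sC sR φC φR (α x) := by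
  rw [tenc, if_neg (Int.not_even_two_mul_add_one x), add_sub_cancel_right,
    Int.mul_ediv_cancel_left _ two_ne_zero]

end Encoding

theorem stmt10_general (sC sR : ℕ) (φC : Fin sC ≃ Fin sC)
    (φR : Fin sR ≃ Fin sR) (α : ℤ → Fin sC × Fin sR) (x : ℤ) :
    BC sC sR (tenc sC sR φC φR α (2 * x)) (tenc sC sR φC φR α (2 * x + 1)) ∧
    ¬ BR sR (tenc sC sR φC φR α (2 * x - 1)) (tenc sC sR φC φR α (2 * x)) := by
  rw [tenc_two_mul, tenc_two_mul_add_one]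
  exact ⟨BC_phat_pcheck φC φR (α x), not_BR_phat φC φR _ (α x)⟩

theorem stmt10 (sC sR : ℕ) (hsC : 0 < sC) (hsR : 0 < sR) (φC : Fin sC ≃ Fin sC)
    (φR : Fin sR ≃ Fin sR) (α : ℤ → Fin sC × Fin sR) (x : ℤ) :
    BC sC sR (tenc sC sR φC φR α (2 * x)) (tenc sC sR φC φR α (2 * x + 1)) ∧
    ¬ BR sR (tenc sC sR φC φR α (2 * x - 1)) (tenc sC sR φC φR α (2 * x)) :=
  stmt10_general sC sR φC φR α x
end

section
/- A 2-neighbor CA whose local function f(q₋₁,q₀) = p_C(q₀) + p_R(q₋₁) for states in Q̃ = {0,...,4sC·sR−1} (heavy part stationary, light part shifting right) is both reversible (its global function is injective) and finite-number-conserving. -/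
open scoped Classical

/-! Every state splits as `q = p_C(q) + p_R(q)`, and `p_C`, `p_R` recover the two summands of
`p_C(q) + p_R(p)`. Hence cell `x` of the image determines `p_C(α x)` and cell `x + 1` determines
`p_R(α x)`, which gives injectivity; conservation is the reindexing `x ↦ x - 1` of the finite sum
of light parts. -/

section Decomposition

variable (sR : ℕ)

lemma pC_zero : pC sR 0 = 0 := by simp [pC]

lemma pR_zero : pR sR 0 = 0 := by simp [pR]

lemma pC_add_pR (q : ℕ) : pC sR q + pR sR q = q := Nat.div_add_mod q (2 * sR)

lemma pR_pC_add_pR (q p : ℕ) : pR sR (pC sR q + pR sR p) = pR sR p := by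
  simp [pC, pR]

lemma pC_pC_add_pR (q p : ℕ) : pC sR (pC sR q + pR sR p) = pC sR q := by
  have h := pC_add_pR sR (pC sR q + pR sR p)
  rw [pR_pC_add_pR] at h
  omega

end Decomposition

lemma eq_of_pC_add_pR_shift_eq (sR : ℕ) {α₁ α₂ : ℤ → ℕ}
    (h : ∀ x, pC sR (α₁ x) + pR sR (α₁ (x - 1)) = pC sR (α₂ x) + pR sR (α₂ (x - 1))) :
    α₁ = α₂ := by
  funext x
  have hC : pC sR (α₁ x) = pC sR (α₂ x) := by
    simpa only [pC_pC_add_pR] using congrArg (pC sR) (h x)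
  have hR : pR sR (α₁ x) = pR sR (α₂ x) := by
    simpa only [add_sub_cancel_right, pR_pC_add_pR] using congrArg (pR sR) (h (x + 1))
  rw [← pC_add_pR sR (α₁ x), ← pC_add_pR sR (α₂ x), hC, hR]

lemma finsum_add_comp_sub_one {M : Type*} [AddCommMonoid M] {c r : ℤ → M}
    (hc : c.support.Finite) (hr : r.support.Finite) :
    ∑ᶠ x, (c x + r (x - 1)) = ∑ᶠ x, (c x + r x) := by
  have hr' : (fun x => r (x - 1)).support.Finite :=
    hr.preimage (Set.injOn_of_injective (sub_left_injective (b := 1)))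
  rw [finsum_add_distrib hc hr', finsum_add_distrib hc hr]
  exact congrArg _ (finsum_comp_equiv (Equiv.subRight (1 : ℤ)))

theorem stmt16_general (sC sR : ℕ) :
    (∀ α1 α2 : ℤ → ℕ, (∀ x : ℤ, α1 x < 4 * sC * sR) → (∀ x : ℤ, α2 x < 4 * sC * sR) →
      (fun x : ℤ => pC sR (α1 x) + pR sR (α1 (x - 1))) =
        (fun x : ℤ => pC sR (α2 x) + pR sR (α2 (x - 1))) → α1 = α2) ∧
    (∀ α : ℤ → ℕ, (∀ x : ℤ, α x < 4 * sC * sR) → {x : ℤ | α x ≠ 0}.Finite →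
      ∑ᶠ x : ℤ, α x = ∑ᶠ x : ℤ, (pC sR (α x) + pR sR (α (x - 1)))) := by
  refine ⟨fun α₁ α₂ _ _ h => eq_of_pC_add_pR_shift_eq sR (congrFun h),
    fun α _ hfin => ?_⟩
  have hC : (pC sR ∘ α).support.Finite :=
    hfin.subset (Function.support_comp_subset (pC_zero sR) α)
  have hR : (pR sR ∘ α).support.Finite :=
    hfin.subset (Function.support_comp_subset (pR_zero sR) α)
  calc ∑ᶠ x, α x = ∑ᶠ x, (pC sR (α x) + pR sR (α x)) := by simp only [pC_add_pR]
    _ = ∑ᶠ x, (pC sR (α x) + pR sR (α (x - 1))) := (finsum_add_comp_sub_one hC hR).symm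

theorem stmt16 (sC sR : ℕ) (hsC : 0 < sC) (hsR : 0 < sR) :
    (∀ α1 α2 : ℤ → ℕ, (∀ x : ℤ, α1 x < 4 * sC * sR) → (∀ x : ℤ, α2 x < 4 * sC * sR) →
      (fun x : ℤ => pC sR (α1 x) + pR sR (α1 (x - 1))) =
        (fun x : ℤ => pC sR (α2 x) + pR sR (α2 (x - 1))) → α1 = α2) ∧
    (∀ α : ℤ → ℕ, (∀ x : ℤ, α x < 4 * sC * sR) → {x : ℤ | α x ≠ 0}.Finite →
      ∑ᶠ x : ℤ, α x = ∑ᶠ x : ℤ, (pC sR (α x) + pR sR (α (x - 1)))) :=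
  stmt16_general sC sR
end
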